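/- arXiv:1910.11733 — 2 statements merged into one kernel-verified Lean document; each statement's English description precedes it below -/
import Mathlib

section
/- Let G be a connected graph of bounded degree admitting a 1-Lipschitz embedding Φ into an L^p space with compression function ρ(x) = k₁ + k₂·x^a for some k₁, k₂ > 0 and a ∈ (0,1] (i.e. ρ(d(x,y)) ≤ ‖Φ(x) − Φ(y)‖ for all x, y). Assume the distortion lower bound c_p(X) ≥ K·log(|X|)·h(X) holds for every finite induced subgraph X (K depending only on p and the degree bound). Then there is a constant K' such that every finite subgraph X of G with n vertices has Cheeger constant h(X)^{2−a} ≤ K'·(log n)^{−a}; consequently Sep(n)/n ≤ K''/(log n)^{a/(2−a)} for some K''. -/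
open Set Filter

namespace SepProfile

variable {V : Type*}

/-- Edge boundary of a vertex set: pairs (a,b) with a ∈ A, b ∉ A, a ~ b. -/
def ebd (G : SimpleGraph V) (A : Set V) : Set (V × V) :=
  {p | G.Adj p.1 p.2 ∧ p.1 ∈ A ∧ p.2 ∉ A}

/-- Isoperimetric ratio |∂A|/|A|. -/
noncomputable def ratio (G : SimpleGraph V) (A : Set V) : ℝ :=
  ((ebd G A).ncard : ℝ) / (A.ncard : ℝ)

/-- Isoperimetric profile Λ(n). -/
noncomputable def isop (G : SimpleGraph V) (n : ℕ) : ℝ :=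
  sInf {x | ∃ A : Set V, A.Finite ∧ A.Nonempty ∧ A.ncard ≤ n ∧ x = ratio G A}

/-- Boundary of A within F (edges of the induced subgraph on F leaving A). -/
def inbd (G : SimpleGraph V) (F A : Set V) : Set (V × V) :=
  {p | G.Adj p.1 p.2 ∧ p.1 ∈ A ∧ p.2 ∈ F \ A}

/-- Cheeger constant of the subgraph induced on F. -/
noncomputable def cheeger (G : SimpleGraph V) (F : Set V) : ℝ :=
  sInf {x | ∃ A : Set V, A ⊆ F ∧ A.Nonempty ∧ 2 * A.ncard ≤ F.ncard ∧
    x = ((inbd G F A).ncard : ℝ) / (A.ncard : ℝ)}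

/-- Separation profile Sep(n) = sup_{|F| ≤ n} |F|·h(F). -/
noncomputable def sep (G : SimpleGraph V) (n : ℕ) : ℝ :=
  sSup {x | ∃ F : Set V, F.Finite ∧ F.ncard ≤ n ∧ x = (F.ncard : ℝ) * cheeger G F}

/-- A finite set is optimal if it realizes the isoperimetric profile. -/
def Optimal (G : SimpleGraph V) (F : Set V) : Prop :=
  F.Finite ∧ F.Nonempty ∧ ratio G F = isop G F.ncard

/-- An integer is optimal if some optimal set has that cardinality. -/
def OptimalInt (G : SimpleGraph V) (n : ℕ) : Prop :=
  ∃ F : Set V, Optimal G F ∧ F.ncard = n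

/-- Ball of radius n around v for the graph metric. -/
def ball (G : SimpleGraph V) (v : V) (n : ℕ) : Set V :=
  {u | G.Reachable v u ∧ G.dist v u ≤ n}

/-- All degrees bounded by D. -/
def DegLE (G : SimpleGraph V) (D : ℕ) : Prop :=
  ∀ v, (G.neighborSet v).ncard ≤ D

/-- Amenability: the isoperimetric profile tends to 0. -/
def Amenable (G : SimpleGraph V) : Prop :=
  Tendsto (fun n => isop G n) atTop (nhds 0)

/-- F together with its outer vertex neighbourhood. -/
def nbh (G : SimpleGraph V) (F : Set V) : Set V :=
  F ∪ {b | ∃ a ∈ F, G.Adj a b}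

/-- Partial self-isomorphisms: every finite F has a disjoint isomorphic copy
(together with its boundary neighbourhood). -/
def HasPSI (G : SimpleGraph V) : Prop :=
  ∀ F : Set V, F.Finite →
    ∃ F' : Set V, F'.Finite ∧ Disjoint F F' ∧
      ∃ e : G.induce (nbh G F) ≃g G.induce (nbh G F'),
        ∀ x : nbh G F, (x : V) ∈ F ↔ ((e x : V) ∈ F')

/-- δ-geometric decay function p_f^δ(x) = inf {y > 0 : f(y) ≤ δ·f(x)}. -/
noncomputable def gdecay (f : ℝ → ℝ) (δ x : ℝ) : ℝ :=
  sInf {y | 0 < y ∧ f y ≤ δ * f x}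

end SepProfile

open SepProfile Real

/-!
Let `X` have `n` vertices and Cheeger constant `h`, and let `D` bound the degrees. Balls of the
subgraph induced on `X` grow by a factor `1 + h / D` as long as they hold at most half of `X`,
so balls of radius `r ≈ 2 D log n / h` around any two points of `X` meet, and
`d(x, y) ≲ D log n / h` throughout `X`. For the pair `x, y` of the distortion bound, the
compression bound `k₂ d^a ≤ ‖Φ x - Φ y‖` gives `K k₂ log n · h · d^a ≤ d`, hence
`K k₂ log n · h ≤ d^(1-a) ≲ (D log n / h)^(1-a)`, which is `h^(2-a) (log n)^a ≲ 1`.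

For `Sep(n)`, a set of size at most `√n` contributes at most `D √n`, and a larger set `F` has
`log |F| ≥ log n / 2`, so the first bound gives `h(F) ≲ (log n)^(-a/(2-a))`.
-/

lemma Set.inter_nonempty_of_ncard_lt_ncard_add_ncard {α : Type*} {s t u : Set α} (hu : u.Finite)
    (hs : s ⊆ u) (ht : t ⊆ u) (h : u.ncard < s.ncard + t.ncard) : (s ∩ t).Nonempty := by
  apply nonempty_of_ncard_ne_zero
  have := ncard_inter_add_ncard_union s t (hu.subset hs) (hu.subset ht)
  have := ncard_le_ncard (union_subset hs ht) hu
  omega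

lemma SimpleGraph.one_le_dist_and_dist_le_of_edist_le {V : Type*} {G : SimpleGraph V} {x y : V}
    {n : ℕ} (hne : x ≠ y) (h : G.edist x y ≤ n) : 1 ≤ G.dist x y ∧ G.dist x y ≤ n := by
  have hreach : G.Reachable x y :=
    SimpleGraph.reachable_of_edist_ne_top (ne_top_of_le_ne_top (ENat.natCast_ne_top n) h)
  refine ⟨hreach.pos_dist_of_ne hne, ?_⟩
  rw [← hreach.coe_dist_eq_edist] at h
  exact_mod_cast h

lemma half_le_log_one_add {t : ℝ} (ht₀ : 0 ≤ t) (ht₁ : t ≤ 1) :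
    t / 2 ≤ log (1 + t) := by
  refine le_trans ?_ (Real.le_log_one_add_of_nonneg ht₀)
  rw [div_le_div_iff₀ two_pos (by linarith)]
  nlinarith

lemma rpow_two_sub_mul_rpow_le_of_le {κ C L h d a : ℝ} (hκ : 0 < κ) (hL : 0 < L) (hh : 0 < h)
    (hd : 0 < d) (ha : a ≤ 1) (hlower : κ * L * h * d ^ a ≤ d) (hupper : d ≤ C * L / h) :
    h ^ (2 - a) * L ^ a ≤ C ^ (1 - a) / κ := by
  have hC : 0 ≤ C := by
    have := hd.trans_le hupper
    rw [div_pos_iff_of_pos_right hh] at this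
    exact (pos_of_mul_pos_left this hL.le).le
  have hda : 0 < d ^ a := rpow_pos_of_pos hd a
  have hkey : κ * L * h ≤ (C * L / h) ^ (1 - a) :=
    calc κ * L * h ≤ d / d ^ a := (le_div_iff₀ hda).mpr hlower
      _ = d ^ (1 - a) := by rw [rpow_sub hd, rpow_one]
      _ ≤ (C * L / h) ^ (1 - a) := rpow_le_rpow hd.le hupper (by linarith)
  have hsplit : (C * L / h) ^ (1 - a) = C ^ (1 - a) * L ^ (1 - a) / h ^ (1 - a) := by
    rw [div_rpow (by positivity) hh.le, mul_rpow hC hL.le]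
  rw [hsplit, le_div_iff₀ (rpow_pos_of_pos hh _)] at hkey
  have hh2 : h ^ (2 - a) = h * h ^ (1 - a) := by
    rw [show 2 - a = 1 + (1 - a) by ring, rpow_add hh, rpow_one]
  have hL1 : L = L ^ a * L ^ (1 - a) := by
    rw [← rpow_add hL, add_sub_cancel, rpow_one]
  rw [le_div_iff₀ hκ, hh2]
  have hL1a : 0 < L ^ (1 - a) := rpow_pos_of_pos hL _
  refine le_of_mul_le_mul_right ?_ hL1a
  calc h * h ^ (1 - a) * L ^ a * κ * L ^ (1 - a)
        = κ * (L ^ a * L ^ (1 - a)) * h * h ^ (1 - a) := by ring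
    _ = κ * L * h * h ^ (1 - a) := by rw [← hL1]
    _ ≤ C ^ (1 - a) * L ^ (1 - a) := hkey

lemma log_rpow_le_mul_sqrt {x c : ℝ} (hx : 1 ≤ x) (hc : 0 < c) :
    log x ^ c ≤ (2 * c) ^ c * x ^ (1 / 2 : ℝ) := by
  have hx0 : 0 < x := by linarith
  have hlog : log x ≤ 2 * c * x ^ (1 / (2 * c)) := by
    have := log_le_rpow_div hx0.le (by positivity : 0 < 1 / (2 * c))
    rwa [div_div_eq_mul_div, div_one, mul_comm] at this
  calc log x ^ c ≤ (2 * c * x ^ (1 / (2 * c))) ^ c := rpow_le_rpow (log_nonneg hx) hlog hc.le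
    _ = (2 * c) ^ c * x ^ (1 / 2 : ℝ) := by
        rw [mul_rpow (by positivity) (by positivity), ← rpow_mul hx0.le]
        congr 2
        field_simp

lemma le_div_rpow_of_rpow_mul_rpow_le {h L M a b : ℝ} (hh : 0 ≤ h) (hL : 0 < L) (hb : 0 < b)
    (hM : h ^ b * L ^ a ≤ M) : h ≤ M ^ (1 / b) / L ^ (a / b) := by
  have hLa : 0 < L ^ a := rpow_pos_of_pos hL a
  have hM0 : 0 ≤ M := le_trans (by positivity) hM
  calc h = (h ^ b) ^ (1 / b) := by rw [← rpow_mul hh, mul_one_div_cancel hb.ne', rpow_one]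
    _ ≤ (M / L ^ a) ^ (1 / b) :=
        rpow_le_rpow (by positivity) ((le_div_iff₀ hLa).mpr hM) (by positivity)
    _ = M ^ (1 / b) / L ^ (a / b) := by
        rw [div_rpow hM0 hLa.le, ← rpow_mul hL.le, mul_one_div]

namespace SepProfile

variable {V : Type*} {G : SimpleGraph V} {D : ℕ}

section Cheeger

variable {F A : Set V}

lemma cheeger_set_bddBelow (G : SimpleGraph V) (F : Set V) :
    BddBelow {x | ∃ A : Set V, A ⊆ F ∧ A.Nonempty ∧ 2 * A.ncard ≤ F.ncard ∧
      x = ((inbd G F A).ncard : ℝ) / (A.ncard : ℝ)} :=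
  ⟨0, by rintro x ⟨A, -, -, -, rfl⟩; positivity⟩

lemma cheeger_nonneg (G : SimpleGraph V) (F : Set V) : 0 ≤ cheeger G F :=
  Real.sInf_nonneg (by rintro x ⟨A, -, -, -, rfl⟩; positivity)

lemma cheeger_le (hAF : A ⊆ F) (hA : A.Nonempty) (hcard : 2 * A.ncard ≤ F.ncard) :
    cheeger G F ≤ (inbd G F A).ncard / A.ncard :=
  csInf_le (cheeger_set_bddBelow G F) ⟨A, hAF, hA, hcard, rfl⟩

lemma le_cheeger {c : ℝ} (hF : 2 ≤ F.ncard)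
    (h : ∀ A ⊆ F, A.Nonempty → 2 * A.ncard ≤ F.ncard →
      c * A.ncard ≤ (inbd G F A).ncard) :
    c ≤ cheeger G F := by
  have hFfin : F.Finite := Set.finite_of_ncard_pos (by omega)
  obtain ⟨x, hx⟩ : F.Nonempty := Set.nonempty_of_ncard_ne_zero (by omega)
  refine le_csInf ⟨_, {x}, singleton_subset_iff.mpr hx, singleton_nonempty x,
    by rw [ncard_singleton]; omega, rfl⟩ ?_
  rintro _ ⟨A, hAF, hA, hcard, rfl⟩
  have hApos : (0 : ℝ) < A.ncard := by
    exact_mod_cast (ncard_pos (hFfin.subset hAF)).mpr hA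
  rw [le_div_iff₀ hApos]
  exact h A hAF hA hcard

lemma cheeger_eq_zero_of_ncard_lt_two (hF : F.ncard < 2) : cheeger G F = 0 := by
  refine le_antisymm (Real.sInf_nonpos ?_) (cheeger_nonneg G F)
  rintro _ ⟨A, -, -, hcard, rfl⟩
  rw [show A.ncard = 0 by omega, Nat.cast_zero, div_zero]

end Cheeger

section BoundedDegree

lemma ncard_le_mul_ncard_of_adj (hfin : ∀ v, (G.neighborSet v).Finite) (hdeg : DegLE G D)
    {S : Set (V × V)} {T : Set V} (hT : T.Finite)
    (hS : ∀ p ∈ S, p.1 ∈ T ∧ G.Adj p.1 p.2) : S.ncard ≤ D * T.ncard := by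
  have hsub : S ⊆ ⋃ t ∈ hT.toFinset, {t} ×ˢ G.neighborSet t := fun p hp =>
    mem_biUnion (hT.mem_toFinset.mpr (hS p hp).1) ⟨rfl, (hS p hp).2⟩
  have hfin' : (⋃ t ∈ hT.toFinset, {t} ×ˢ G.neighborSet t).Finite :=
    hT.toFinset.finite_toSet.biUnion fun t _ => (finite_singleton t).prod (hfin t)
  calc S.ncard ≤ (⋃ t ∈ hT.toFinset, {t} ×ˢ G.neighborSet t).ncard :=
        ncard_le_ncard hsub hfin'
    _ ≤ ∑ t ∈ hT.toFinset, ({t} ×ˢ G.neighborSet t).ncard := Finset.set_ncard_biUnion_le _ _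
    _ ≤ ∑ _t ∈ hT.toFinset, D := Finset.sum_le_sum fun t _ => by
        rw [singleton_prod, ncard_image_of_injective _ (Prod.mk_right_injective t)]
        exact hdeg t
    _ = D * T.ncard := by rw [Finset.sum_const, smul_eq_mul, mul_comm, ncard_eq_toFinset_card _ hT]

lemma cheeger_le_degree (hfin : ∀ v, (G.neighborSet v).Finite) (hdeg : DegLE G D)
    (F : Set V) : cheeger G F ≤ D := by
  rcases lt_or_ge F.ncard 2 with hF | hF
  · rw [cheeger_eq_zero_of_ncard_lt_two hF]
    positivity
  obtain ⟨x, hx⟩ : F.Nonempty := Set.nonempty_of_ncard_ne_zero (by omega)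
  have hcount : (inbd G F {x}).ncard ≤ D * ({x} : Set V).ncard :=
    ncard_le_mul_ncard_of_adj hfin hdeg (finite_singleton x) fun p hp => ⟨hp.2.1, hp.1⟩
  calc cheeger G F ≤ (inbd G F {x}).ncard / ({x} : Set V).ncard :=
        cheeger_le (singleton_subset_iff.mpr hx) (singleton_nonempty x)
          (by rw [ncard_singleton]; omega)
    _ ≤ D := by
        rw [ncard_singleton] at hcount ⊢
        rw [Nat.cast_one, div_one]
        exact_mod_cast hcount.trans_eq (mul_one D)

end BoundedDegree

section InducedBall

variable {X : Set V} {v : V}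

def inducedBall (G : SimpleGraph V) (X : Set V) (v : V) : ℕ → Set V
  | 0 => {v}
  | r + 1 => inducedBall G X v r ∪ {u | u ∈ X ∧ ∃ w ∈ inducedBall G X v r, G.Adj w u}

lemma mem_inducedBall_self : ∀ r, v ∈ inducedBall G X v r
  | 0 => rfl
  | r + 1 => Or.inl (mem_inducedBall_self r)

lemma inducedBall_subset (hv : v ∈ X) : ∀ r, inducedBall G X v r ⊆ X
  | 0 => singleton_subset_iff.mpr hv
  | r + 1 => union_subset (inducedBall_subset hv r) fun _ hu => hu.1

lemma inducedBall_mono : Monotone (inducedBall G X v) :=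
  monotone_nat_of_le_succ fun _ => subset_union_left

lemma edist_le_of_mem_inducedBall : ∀ {r u}, u ∈ inducedBall G X v r → G.edist v u ≤ r
  | 0, u, hu => by rw [show u = v from hu, SimpleGraph.edist_self]; exact bot_le
  | r + 1, u, .inl hu => (edist_le_of_mem_inducedBall hu).trans (by norm_cast; omega)
  | r + 1, u, .inr ⟨_, w, hw, hwu⟩ =>
      calc G.edist v u ≤ G.edist v w + G.edist w u := SimpleGraph.edist_triangle
        _ ≤ r + 1 := add_le_add (edist_le_of_mem_inducedBall hw)
          (SimpleGraph.edist_eq_one_iff_adj.mpr hwu).le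

end InducedBall

section Expansion

variable {X : Set V} {v : V}

lemma ncard_inducedBall_succ_ge (hfin : ∀ v, (G.neighborSet v).Finite) (hdeg : DegLE G D)
    (hX : X.Finite) (hv : v ∈ X) {r : ℕ} (hr : 2 * (inducedBall G X v r).ncard ≤ X.ncard) :
    (D + cheeger G X) * (inducedBall G X v r).ncard ≤ D * (inducedBall G X v (r + 1)).ncard := by
  set B := inducedBall G X v r
  set B' := inducedBall G X v (r + 1)
  have hBfin : B.Finite := hX.subset (inducedBall_subset hv r)
  have hBB' : B ⊆ B' := inducedBall_mono r.le_succ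
  have hBpos : (0 : ℝ) < B.ncard := by
    exact_mod_cast (ncard_pos hBfin).mpr ⟨v, mem_inducedBall_self r⟩
  have hcheeger : cheeger G X * B.ncard ≤ (inbd G X B).ncard :=
    (le_div_iff₀ hBpos).mp
      (cheeger_le (inducedBall_subset hv r) ⟨v, mem_inducedBall_self r⟩ hr)
  -- each boundary edge of `B` ends in the next shell `B' \ B`
  have hshell : (inbd G X B).ncard ≤ D * (B' \ B).ncard := by
    rw [← ncard_image_of_injective _ Prod.swap_injective]
    refine ncard_le_mul_ncard_of_adj hfin hdeg
      ((hX.subset (inducedBall_subset hv (r + 1))).sdiff) ?_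
    rintro _ ⟨⟨a, b⟩, ⟨hab, ha, hb⟩, rfl⟩
    exact ⟨⟨Or.inr ⟨hb.1, a, ha, hab⟩, hb.2⟩, hab.symm⟩
  have hdiff : ((B' \ B).ncard : ℝ) = B'.ncard - B.ncard := by
    rw [ncard_sdiff hBB' hBfin, Nat.cast_sub (ncard_le_ncard hBB' (hX.subset
      (inducedBall_subset hv (r + 1))))]
  have : ((inbd G X B).ncard : ℝ) ≤ D * (B'.ncard - B.ncard) := by
    rw [← hdiff]; exact_mod_cast hshell
  linarith

lemma one_add_cheeger_div_pow_le_ncard_inducedBall (hfin : ∀ v, (G.neighborSet v).Finite)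
    (hdeg : DegLE G D) (hD : 0 < D) (hX : X.Finite) (hv : v ∈ X) :
    ∀ r, 2 * (inducedBall G X v r).ncard ≤ X.ncard →
      (1 + cheeger G X / D) ^ r ≤ (inducedBall G X v r).ncard
  | 0, _ => by simp [inducedBall]
  | r + 1, hr => by
      have hr' : 2 * (inducedBall G X v r).ncard ≤ X.ncard :=
        le_trans (Nat.mul_le_mul_left 2 (ncard_le_ncard (inducedBall_mono r.le_succ)
          (hX.subset (inducedBall_subset hv (r + 1))))) hr
      have hD' : (0 : ℝ) < D := by exact_mod_cast hD
      have hq : 0 ≤ 1 + cheeger G X / D :=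
        add_nonneg zero_le_one (div_nonneg (cheeger_nonneg G X) D.cast_nonneg)
      calc (1 + cheeger G X / D) ^ (r + 1)
          = (1 + cheeger G X / D) * (1 + cheeger G X / D) ^ r := pow_succ' _ _
        _ ≤ (1 + cheeger G X / D) * (inducedBall G X v r).ncard := by
          gcongr
          exact one_add_cheeger_div_pow_le_ncard_inducedBall hfin hdeg hD hX hv r hr'
        _ = (D + cheeger G X) * (inducedBall G X v r).ncard / D := by field_simp
        _ ≤ (inducedBall G X v (r + 1)).ncard := by
          rw [div_le_iff₀ hD', mul_comm _ (D : ℝ)]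
          exact ncard_inducedBall_succ_ge hfin hdeg hX hv hr'

lemma exists_radius_lt_two_mul_ncard_inducedBall (hfin : ∀ v, (G.neighborSet v).Finite)
    (hdeg : DegLE G D) (hX : X.Finite) (hX2 : 2 ≤ X.ncard) (hh : 0 < cheeger G X) :
    ∃ r : ℕ, ((r : ℝ) - 1) * cheeger G X ≤ 2 * D * log X.ncard ∧
      ∀ v ∈ X, X.ncard < 2 * (inducedBall G X v r).ncard := by
  set h := cheeger G X
  set n := X.ncard
  have hhD : h ≤ D := cheeger_le_degree hfin hdeg X
  have hD : 0 < D := by exact_mod_cast hh.trans_le hhD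
  have hD' : (0 : ℝ) < D := by exact_mod_cast hD
  have hlogn : 0 ≤ log n := log_natCast_nonneg n
  set q := 1 + h / D
  have hlogq : h / D / 2 ≤ log q :=
    half_le_log_one_add (by positivity) ((div_le_one hD').mpr hhD)
  have hlogq_pos : 0 < log q := lt_of_lt_of_le (by positivity) hlogq
  refine ⟨⌊log n / log q⌋₊ + 1, ?_, fun v hv => ?_⟩
  · have hfloor : (⌊log n / log q⌋₊ : ℝ) ≤ 2 * D * log n / h :=
      calc (⌊log n / log q⌋₊ : ℝ) ≤ log n / log q := Nat.floor_le (by positivity)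
        _ ≤ log n / (h / D / 2) := div_le_div_of_nonneg_left hlogn (by positivity) hlogq
        _ = 2 * D * log n / h := by field_simp
    push_cast
    rw [add_sub_cancel_right]
    exact (le_div_iff₀ hh).mp hfloor
  · by_contra! hsmall
    have hpow := one_add_cheeger_div_pow_le_ncard_inducedBall hfin hdeg hD hX hv _ hsmall
    have hball : ((inducedBall G X v (⌊log n / log q⌋₊ + 1)).ncard : ℝ) ≤ n := by
      exact_mod_cast ncard_le_ncard (inducedBall_subset hv _) hX
    have hlt : log n < log (q ^ (⌊log n / log q⌋₊ + 1)) := by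
      rw [Real.log_pow, ← div_lt_iff₀ hlogq_pos]
      exact_mod_cast Nat.lt_floor_add_one (log n / log q)
    have hn : (0 : ℝ) < n := by exact_mod_cast (by omega : 0 < n)
    exact absurd (log_le_log (by positivity) (hpow.trans hball)) (not_le.mpr hlt)

lemma dist_le_two_mul_of_lt_two_mul_ncard_inducedBall (hX : X.Finite) {x y : V} {r : ℕ}
    (hx : x ∈ X) (hy : y ∈ X) (hxy : x ≠ y) (hbx : X.ncard < 2 * (inducedBall G X x r).ncard)
    (hby : X.ncard < 2 * (inducedBall G X y r).ncard) :
    1 ≤ G.dist x y ∧ G.dist x y ≤ 2 * r := by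
  obtain ⟨w, hwx, hwy⟩ := Set.inter_nonempty_of_ncard_lt_ncard_add_ncard hX
    (inducedBall_subset (G := G) hx r) (inducedBall_subset (G := G) hy r) (by omega)
  refine SimpleGraph.one_le_dist_and_dist_le_of_edist_le hxy ?_
  calc G.edist x y ≤ G.edist x w + G.edist w y := SimpleGraph.edist_triangle
    _ ≤ r + r := by
        rw [SimpleGraph.edist_comm (u := w)]
        exact add_le_add (edist_le_of_mem_inducedBall hwx) (edist_le_of_mem_inducedBall hwy)
    _ = (2 * r : ℕ) := by push_cast; ring

theorem cheeger_rpow_mul_log_rpow_le (hfin : ∀ v, (G.neighborSet v).Finite) (hdeg : DegLE G D)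
    {κ a : ℝ} (hκ : 0 < κ) (ha : a ≤ 1) (hX : X.Finite) (hX2 : 2 ≤ X.ncard)
    (hpair : ∃ x ∈ X, ∃ y ∈ X, x ≠ y ∧
      κ * log X.ncard * cheeger G X * (G.dist x y : ℝ) ^ a ≤ G.dist x y) :
    cheeger G X ^ (2 - a) * log X.ncard ^ a ≤ (D * (2 / log 2 + 4)) ^ (1 - a) / κ := by
  rcases (cheeger_nonneg G X).eq_or_lt with hzero | hh
  · rw [← hzero, zero_rpow (by linarith), zero_mul]
    positivity
  set h := cheeger G X
  set L := log X.ncard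
  have hlog2 : log 2 ≤ L := log_le_log two_pos (by exact_mod_cast hX2)
  have hL : 0 < L := (log_pos one_lt_two).trans_le hlog2
  have hhD : h ≤ D := cheeger_le_degree hfin hdeg X
  obtain ⟨x, hx, y, hy, hxy, hlower⟩ := hpair
  obtain ⟨r, hr, hballs⟩ := exists_radius_lt_two_mul_ncard_inducedBall hfin hdeg hX hX2 hh
  obtain ⟨hd1, hd2⟩ := dist_le_two_mul_of_lt_two_mul_ncard_inducedBall hX hx hy hxy
    (hballs x hx) (hballs y hy)
  have hd1' : (1 : ℝ) ≤ G.dist x y := by exact_mod_cast hd1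
  have hd2' : (G.dist x y : ℝ) ≤ 2 * r := by exact_mod_cast hd2
  refine rpow_two_sub_mul_rpow_le_of_le hκ hL hh (d := G.dist x y) (by linarith) ha hlower ?_
  have hDL : (D : ℝ) ≤ D * L / log 2 := by
    rw [le_div_iff₀ (log_pos one_lt_two)]
    exact mul_le_mul_of_nonneg_left hlog2 (Nat.cast_nonneg D)
  rw [le_div_iff₀ hh]
  calc (G.dist x y : ℝ) * h ≤ 2 * r * h := by gcongr
    _ ≤ 2 * D + 4 * D * L := by nlinarith
    _ ≤ D * (2 / log 2 + 4) * L := by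
        rw [show D * (2 / log 2 + 4) * L = 2 * (D * L / log 2) + 4 * D * L by ring]
        linarith

end Expansion

lemma exists_pair_of_compression {E : Type*} [NormedAddCommGroup E] {Φ : V → E}
    {k₁ k₂ a K : ℝ} (hk₁ : 0 ≤ k₁) (hK : 0 ≤ K)
    (hcomp : ∀ x y : V, x ≠ y → k₁ + k₂ * ((G.dist x y : ℝ)) ^ a ≤ ‖Φ x - Φ y‖)
    {X : Set V}
    (hdist : ∃ x ∈ X, ∃ y ∈ X, x ≠ y ∧
      K * log X.ncard * cheeger G X * ‖Φ x - Φ y‖ ≤ (G.dist x y : ℝ)) :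
    ∃ x ∈ X, ∃ y ∈ X, x ≠ y ∧
      K * k₂ * log X.ncard * cheeger G X * (G.dist x y : ℝ) ^ a ≤ G.dist x y := by
  obtain ⟨x, hx, y, hy, hxy, h⟩ := hdist
  refine ⟨x, hx, y, hy, hxy, le_trans ?_ h⟩
  have : 0 ≤ K * log X.ncard * cheeger G X :=
    mul_nonneg (mul_nonneg hK (log_natCast_nonneg _)) (cheeger_nonneg G X)
  calc K * k₂ * log X.ncard * cheeger G X * (G.dist x y : ℝ) ^ a
      = K * log X.ncard * cheeger G X * (k₂ * (G.dist x y : ℝ) ^ a) := by ring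
    _ ≤ K * log X.ncard * cheeger G X * ‖Φ x - Φ y‖ := by
        gcongr
        linarith [hcomp x y hxy]

lemma one_le_cheeger_insert {v : V} {S : Set V} (hS : S ⊆ G.neighborSet v) (hSfin : S.Finite)
    (hSne : S.Nonempty) : 1 ≤ cheeger G (insert v S) := by
  set X := insert v S
  have hvS : v ∉ S := fun h => G.irrefl (hS h)
  have hXfin : X.Finite := hSfin.insert v
  have hX : X.ncard = S.ncard + 1 := ncard_insert_of_notMem hvS hSfin
  have hS1 : 0 < S.ncard := (ncard_pos hSfin).mpr hSne
  refine le_cheeger (by omega) fun A hAX hA hcard => ?_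
  have hinbd : (inbd G X A).Finite :=
    ((hXfin.subset hAX).prod hXfin).subset fun p hp => ⟨hp.2.1, hp.2.2.1⟩
  rw [one_mul, Nat.cast_le]
  by_cases hvA : v ∈ A
  · have hedges : (Prod.mk v '' (X \ A)) ⊆ inbd G X A := by
      rintro _ ⟨u, hu, rfl⟩
      refine ⟨?_, hvA, hu⟩
      rcases hu.1 with rfl | huS
      · exact absurd hvA hu.2
      · exact hS huS
    have := ncard_le_ncard hedges hinbd
    rw [ncard_image_of_injective _ (Prod.mk_right_injective v),
      ncard_sdiff hAX (hXfin.subset hAX)] at this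
    omega
  · have hedges : ((·, v) '' A) ⊆ inbd G X A := by
      rintro _ ⟨u, hu, rfl⟩
      refine ⟨?_, hu, mem_insert v S, hvA⟩
      rcases hAX hu with rfl | huS
      · exact absurd hu hvA
      · exact (hS huS).symm
    simpa only [ncard_image_of_injective _ (Prod.mk_left_injective v)] using
      ncard_le_ncard hedges hinbd

-- `DegLE` is vacuous at a vertex of infinite degree (`ncard` is then `0`). A star with `m`
-- leaves has Cheeger constant `≥ 1` and diameter `≤ 2`, so the distortion bound forces
-- `κ log (m + 1) ≤ 2`.
lemma neighborSet_finite {κ a : ℝ} (hκ : 0 < κ) (ha : 0 ≤ a)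
    (hpair : ∀ X : Set V, X.Finite → 2 ≤ X.ncard → ∃ x ∈ X, ∃ y ∈ X, x ≠ y ∧
      κ * log X.ncard * cheeger G X * (G.dist x y : ℝ) ^ a ≤ G.dist x y)
    (v : V) : (G.neighborSet v).Finite := by
  by_contra hinf
  obtain ⟨m, hm⟩ := exists_nat_gt (exp (2 / κ))
  obtain ⟨S, hSv, hSfin, hSm⟩ := Set.Infinite.exists_subset_ncard_eq hinf m
  have hm0 : 0 < m := by exact_mod_cast (exp_pos _).trans hm
  have hSne : S.Nonempty := nonempty_of_ncard_ne_zero (by omega)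
  set X := insert v S
  have hX : X.ncard = m + 1 := by
    rw [ncard_insert_of_notMem (fun h => G.irrefl (hSv h)) hSfin, hSm]
  obtain ⟨x, hx, y, hy, hxy, hlower⟩ := hpair X (hSfin.insert v) (by omega)
  have hcentre : ∀ u ∈ X, G.edist u v ≤ 1 := by
    rintro u (rfl | hu)
    · exact SimpleGraph.edist_le_one_iff_adj_or_eq.mpr (Or.inr rfl)
    · exact SimpleGraph.edist_le_one_iff_adj_or_eq.mpr (Or.inl (hSv hu).symm)
  obtain ⟨hd1, hd2⟩ := SimpleGraph.one_le_dist_and_dist_le_of_edist_le (n := 2) hxy <|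
    calc G.edist x y ≤ G.edist x v + G.edist v y := SimpleGraph.edist_triangle
      _ ≤ 1 + 1 := add_le_add (hcentre x hx) (SimpleGraph.edist_comm.trans_le (hcentre y hy))
      _ = (2 : ℕ) := rfl
  have hlogX : 2 / κ < log X.ncard := by
    rw [hX, lt_log_iff_exp_lt (by positivity)]
    push_cast
    linarith
  have hd1' : (1 : ℝ) ≤ G.dist x y := by exact_mod_cast hd1
  have hd2' : (G.dist x y : ℝ) ≤ 2 := by exact_mod_cast hd2
  have hcheeger := one_le_cheeger_insert hSv hSfin hSne
  have : κ * log X.ncard ≤ 2 :=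
    calc κ * log X.ncard ≤ κ * log X.ncard * cheeger G X * (G.dist x y : ℝ) ^ a := by
          have := one_le_rpow hd1' ha
          rw [mul_assoc]
          exact le_mul_of_one_le_right (by positivity)
            (one_le_mul_of_one_le_of_one_le hcheeger this)
      _ ≤ 2 := hlower.trans hd2'
  rw [div_lt_iff₀' hκ] at hlogX
  linarith

section Separation

variable {F : Set V} {n : ℕ}

lemma ncard_mul_cheeger_le_of_ncard_le_sqrt (hfin : ∀ v, (G.neighborSet v).Finite)
    (hdeg : DegLE G D) {c : ℝ} (hc : 0 < c) (hn : 2 ≤ n)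
    (hF : (F.ncard : ℝ) ≤ (n : ℝ) ^ (1 / 2 : ℝ)) :
    F.ncard * cheeger G F ≤ n * (D * (2 * c) ^ c / log n ^ c) := by
  have hn1 : (1 : ℝ) ≤ n := by exact_mod_cast (by omega : 1 ≤ n)
  have hlog : 0 < log n ^ c := rpow_pos_of_pos (log_pos (by exact_mod_cast hn)) c
  have hsqrt : (n : ℝ) ^ (1 / 2 : ℝ) * (n : ℝ) ^ (1 / 2 : ℝ) = n := by
    rw [← rpow_add (by positivity)]; norm_num
  rw [← mul_div_assoc, le_div_iff₀ hlog]
  calc F.ncard * cheeger G F * log n ^ c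
      ≤ (n : ℝ) ^ (1 / 2 : ℝ) * D * ((2 * c) ^ c * (n : ℝ) ^ (1 / 2 : ℝ)) := by
        gcongr
        · exact cheeger_nonneg G F
        · exact cheeger_le_degree hfin hdeg F
        · exact log_rpow_le_mul_sqrt hn1 hc
    _ = ((n : ℝ) ^ (1 / 2 : ℝ) * (n : ℝ) ^ (1 / 2 : ℝ)) * (D * (2 * c) ^ c) := by ring
    _ = n * (D * (2 * c) ^ c) := by rw [hsqrt]

lemma ncard_mul_cheeger_le_of_sqrt_lt {a M : ℝ} (ha₀ : 0 ≤ a) (ha₂ : a < 2)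
    (hM : ∀ X : Set V, X.Finite → 2 ≤ X.ncard →
      cheeger G X ^ (2 - a) * log X.ncard ^ a ≤ M)
    (hF : F.Finite) (hFn : F.ncard ≤ n) (hsqrt : (n : ℝ) ^ (1 / 2 : ℝ) < F.ncard) :
    F.ncard * cheeger G F ≤
      n * (M ^ (1 / (2 - a)) * 2 ^ (a / (2 - a)) / log n ^ (a / (2 - a))) := by
  have hn : (0 : ℝ) < n := by
    have : (F.ncard : ℝ) ≤ n := by exact_mod_cast hFn
    exact ((rpow_nonneg (Nat.cast_nonneg n) _).trans_lt hsqrt).trans_le this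
  have hF2 : 2 ≤ F.ncard := by
    have hn1 : (1 : ℝ) ≤ n := Nat.one_le_cast.mpr (Nat.cast_pos.mp hn)
    have : (1 : ℝ) < F.ncard := (one_le_rpow hn1 (by norm_num)).trans_lt hsqrt
    exact_mod_cast this
  have hlog : 0 < log n / 2 := by
    have : (2 : ℝ) ≤ n := by exact_mod_cast hF2.trans hFn
    linarith [log_pos (by linarith : (1 : ℝ) < n)]
  have hscale : log n / 2 ≤ log F.ncard := by
    have := log_le_log (by positivity) hsqrt.le
    rwa [log_rpow hn, one_div_mul_eq_div] at this
  have hcheeger := le_div_rpow_of_rpow_mul_rpow_le (cheeger_nonneg G F) hlog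
    (by linarith : 0 < 2 - a) <| calc
      cheeger G F ^ (2 - a) * (log n / 2) ^ a ≤ cheeger G F ^ (2 - a) * log F.ncard ^ a := by
        have := cheeger_nonneg G F
        gcongr
      _ ≤ M := hM F hF hF2
  rw [div_rpow (by positivity) two_pos.le, div_div_eq_mul_div] at hcheeger
  have hFn' : (F.ncard : ℝ) ≤ n := by exact_mod_cast hFn
  exact mul_le_mul hFn' hcheeger (cheeger_nonneg G F) hn.le

theorem exists_sep_div_le_div_log_rpow (hfin : ∀ v, (G.neighborSet v).Finite)
    (hdeg : DegLE G D) {a M : ℝ} (ha₀ : 0 < a) (ha₂ : a < 2) (hM₀ : 0 < M)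
    (hM : ∀ X : Set V, X.Finite → 2 ≤ X.ncard →
      cheeger G X ^ (2 - a) * log X.ncard ^ a ≤ M) :
    ∃ K'' > (0 : ℝ), ∀ n : ℕ, 2 ≤ n → sep G n / n ≤ K'' / log n ^ (a / (2 - a)) := by
  set c := a / (2 - a)
  have hc : 0 < c := div_pos ha₀ (by linarith)
  have hsmall₀ : 0 ≤ D * (2 * c) ^ c := mul_nonneg D.cast_nonneg (rpow_nonneg (by linarith) _)
  refine ⟨D * (2 * c) ^ c + M ^ (1 / (2 - a)) * 2 ^ c, by positivity, fun n hn => ?_⟩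
  have hlog : 0 < log n ^ c := rpow_pos_of_pos (log_pos (by exact_mod_cast hn)) c
  rw [div_le_iff₀ (by positivity), add_div, mul_comm]
  refine Real.sSup_le ?_ (by positivity)
  rintro _ ⟨F, hF, hFn, rfl⟩
  rcases le_or_gt (F.ncard : ℝ) ((n : ℝ) ^ (1 / 2 : ℝ)) with hsmall | hlarge
  · calc F.ncard * cheeger G F ≤ n * (D * (2 * c) ^ c / log n ^ c) :=
          ncard_mul_cheeger_le_of_ncard_le_sqrt hfin hdeg hc hn hsmall
      _ ≤ _ := by
          gcongr
          exact le_add_of_nonneg_right (by positivity)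
  · calc F.ncard * cheeger G F ≤ n * (M ^ (1 / (2 - a)) * 2 ^ c / log n ^ c) :=
          ncard_mul_cheeger_le_of_sqrt_lt ha₀.le ha₂ hM hF hFn hlarge
      _ ≤ _ := by
          gcongr
          exact le_add_of_nonneg_left (div_nonneg hsmall₀ hlog.le)

end Separation

end SepProfile

theorem stmt16_general {V : Type*} {E : Type*} [NormedAddCommGroup E]
    (G : SimpleGraph V) (D : ℕ) (hdeg : DegLE G D)
    (Φ : V → E)
    (k₁ k₂ a : ℝ) (hk₁ : 0 < k₁) (hk₂ : 0 < k₂) (ha : a ∈ Set.Ioc (0:ℝ) 1)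
    (hcomp : ∀ x y : V, x ≠ y →
      k₁ + k₂ * ((G.dist x y : ℝ)) ^ a ≤ ‖Φ x - Φ y‖)
    (K : ℝ) (hK : 0 < K)
    (hdist : ∀ X : Set V, X.Finite → 2 ≤ X.ncard →
      ∃ x ∈ X, ∃ y ∈ X, x ≠ y ∧
        K * Real.log X.ncard * cheeger G X * ‖Φ x - Φ y‖ ≤ (G.dist x y : ℝ)) :
    (∃ K' > (0:ℝ), ∀ X : Set V, X.Finite → 2 ≤ X.ncard →
      cheeger G X ^ (2 - a) * (Real.log X.ncard) ^ a ≤ K') ∧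
    (∃ K'' > (0:ℝ), ∃ N₀ : ℕ, ∀ n : ℕ, N₀ ≤ n →
      sep G n / (n : ℝ) ≤ K'' / (Real.log n) ^ (a / (2 - a))) := by
  obtain ⟨ha₀, ha₁⟩ := ha
  have hκ : 0 < K * k₂ := mul_pos hK hk₂
  have hpair X (hX : X.Finite) (hX2 : 2 ≤ X.ncard) :=
    exists_pair_of_compression hk₁.le hK.le hcomp (hdist X hX hX2)
  have hfin := neighborSet_finite hκ ha₀.le hpair
  set M := max ((D * (2 / log 2 + 4)) ^ (1 - a) / (K * k₂)) 1
  have hM : ∀ X : Set V, X.Finite → 2 ≤ X.ncard →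
      cheeger G X ^ (2 - a) * log X.ncard ^ a ≤ M :=
    fun X hX hX2 => (cheeger_rpow_mul_log_rpow_le hfin hdeg hκ ha₁ hX hX2
      (hpair X hX hX2)).trans (le_max_left _ _)
  have hM₀ : 0 < M := lt_max_of_lt_right one_pos
  obtain ⟨K'', hK'', hsep⟩ :=
    exists_sep_div_le_div_log_rpow hfin hdeg ha₀ (by linarith) hM₀ hM
  exact ⟨⟨M, hM₀, hM⟩, K'', hK'', 2, hsep⟩

theorem stmt16 {V : Type*} {E : Type*} [NormedAddCommGroup E]
    (G : SimpleGraph V) (hconn : G.Connected) (D : ℕ) (hdeg : DegLE G D)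
    (Φ : V → E) (hlip : ∀ x y : V, ‖Φ x - Φ y‖ ≤ (G.dist x y : ℝ))
    (k₁ k₂ a : ℝ) (hk₁ : 0 < k₁) (hk₂ : 0 < k₂) (ha : a ∈ Set.Ioc (0:ℝ) 1)
    (hcomp : ∀ x y : V, x ≠ y →
      k₁ + k₂ * ((G.dist x y : ℝ)) ^ a ≤ ‖Φ x - Φ y‖)
    (K : ℝ) (hK : 0 < K)
    (hdist : ∀ X : Set V, X.Finite → 2 ≤ X.ncard →
      ∃ x ∈ X, ∃ y ∈ X, x ≠ y ∧
        K * Real.log X.ncard * cheeger G X * ‖Φ x - Φ y‖ ≤ (G.dist x y : ℝ)) :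
    (∃ K' > (0:ℝ), ∀ X : Set V, X.Finite → 2 ≤ X.ncard →
      cheeger G X ^ (2 - a) * (Real.log X.ncard) ^ a ≤ K') ∧
    (∃ K'' > (0:ℝ), ∃ N₀ : ℕ, ∀ n : ℕ, N₀ ≤ n →
      sep G n / (n : ℝ) ≤ K'' / (Real.log n) ^ (a / (2 - a))) :=
  stmt16_general G D hdeg Φ k₁ k₂ a hk₁ hk₂ ha hcomp K hK hdist
end

section
/- Fix d₁, d₂, C > 0 with d₂ ≥ d₁ > 1 and d₁² > d₂ − d₁. Let G be a graph, g > 0, ε > 0 with 2^{1/(d₁+1)} ≤ 2^{1/d₁}/(1+ε), and let F₁ be a finite vertex set with |∂F₁|/|F₁| ≤ C/r and |F₁| ≤ b·r^{d₂} for some r ≥ 1, b > 0, such that every subset A of F₁ satisfies |∂A| ≥ g·|A|^{1−1/d₁}. Define recursively F_{i+1} ⊆ F_i to be any subset with |F_{i+1}| ≤ |F_i|/2 and |∂F_{i+1}|/|F_{i+1}| ≤ (1+ε)·|∂F_i|/|F_i| as long as one exists, and let F_k be the final set. Then |F_k| ≥ c·g^{d₁+1}·r^{(d₁² − (d₂ −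 d₁))/d₁} with c = C^{−(d₁+1)}·b^{−1/d₁}. -/
/-!
Along the chain the ratio |∂F_i|/|F_i| grows by a factor at most 1 + ε per step while the size at
least halves. After m = k - 1 steps the isoperimetric inequality gives
g·|F_k|^(-1/d₁) ≤ |∂F_k|/|F_k| ≤ (1+ε)^m·C/r, and halving gives 2^m·|F_k| ≤ |F₁| ≤ b·r^d₂.
The hypothesis on ε says exactly (1+ε)^(d₁(d₁+1)) ≤ 2, so raising the first bound to the power
d₁(d₁+1) lets the second one absorb the unknown number of steps m. In logarithms all of this is
linear arithmetic.
-/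

open Set Filter

open SepProfile Real

theorem le_pow_sub_one_mul_of_le_mul {α : Type*} [Semiring α] [PartialOrder α] [IsOrderedRing α]
    {x : ℕ → α} {c : α} (hc : 0 ≤ c) {k : ℕ} (hk : 1 ≤ k)
    (h : ∀ i, 1 ≤ i → i < k → x (i + 1) ≤ c * x i) : x k ≤ c ^ (k - 1) * x 1 := by
  induction k, hk using Nat.le_induction with
  | base => simp
  | succ k hk ih =>
    calc x (k + 1) ≤ c * x k := h k hk k.lt_succ_self
      _ ≤ c * (c ^ (k - 1) * x 1) := by
          gcongr
          exact ih fun i hi hik => h i hi (hik.trans k.lt_succ_self)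
      _ = c ^ (k + 1 - 1) * x 1 := by
          rw [← mul_assoc, ← pow_succ', Nat.sub_add_cancel hk, Nat.add_sub_cancel]

theorem rpow_mul_add_one_le_two {d q : ℝ} (hd : 0 < d) (hq : 0 < q)
    (h : (2:ℝ) ^ (1 / (d + 1)) ≤ (2:ℝ) ^ (1 / d) / q) : q ^ (d * (d + 1)) ≤ 2 := by
  have hq_le : q ≤ (2:ℝ) ^ (d * (d + 1))⁻¹ := by
    have hexp : (d * (d + 1))⁻¹ = 1 / d - 1 / (d + 1) := by field_simp; ring
    rw [hexp, Real.rpow_sub two_pos, le_div_iff₀ (by positivity), mul_comm]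
    exact (le_div_iff₀ hq).mp h
  calc q ^ (d * (d + 1)) ≤ ((2:ℝ) ^ (d * (d + 1))⁻¹) ^ (d * (d + 1)) := by gcongr
    _ = 2 := Real.rpow_inv_rpow zero_le_two (by positivity)

theorem mul_rpow_neg_le_div {g n E y : ℝ} (hn : 0 < n) (h : g * n ^ (1 - y) ≤ E) :
    g * n ^ (-y) ≤ E / n := by
  rw [show -y = 1 - y - 1 by ring, Real.rpow_sub_one hn.ne', ← mul_div_assoc]
  gcongr

theorem le_of_mul_rpow_neg_le_of_two_pow_mul_le {d d₂ C g b r q n : ℝ} {m : ℕ}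
    (hd : 0 < d) (hC : 0 < C) (hg : 0 < g) (hb : 0 < b) (hr : 0 < r) (hq : 0 < q) (hn : 0 < n)
    (hq2 : q ^ (d * (d + 1)) ≤ 2)
    (hdecay : g * n ^ (-(1 / d)) ≤ q ^ m * (C / r)) (hshrink : 2 ^ m * n ≤ b * r ^ d₂) :
    C ^ (-(d + 1)) * b ^ (-(1 / d)) * g ^ (d + 1) * r ^ ((d ^ 2 - (d₂ - d)) / d) ≤ n := by
  have hlog_q : d * (d + 1) * log q ≤ log 2 := by
    simpa [Real.log_rpow hq] using Real.log_le_log (by positivity) hq2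
  have hlog_decay : d * log g - log n ≤ d * (m * log q + log C - log r) := by
    have := Real.log_le_log (by positivity) hdecay
    rw [Real.log_mul hg.ne' (by positivity), Real.log_rpow hn, Real.log_mul (by positivity)
      (by positivity), Real.log_pow, Real.log_div hC.ne' hr.ne'] at this
    have := mul_le_mul_of_nonneg_left this hd.le
    field_simp at this
    linarith
  have hlog_shrink : m * log 2 + log n ≤ log b + d₂ * log r := by
    have := Real.log_le_log (by positivity) hshrink
    rwa [Real.log_mul (by positivity) hn.ne', Real.log_pow, Real.log_mul hb.ne' (by positivity),
      Real.log_rpow hr] at this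
  rw [← Real.log_le_log_iff (by positivity) hn, Real.log_mul (by positivity) (by positivity),
    Real.log_mul (by positivity) (by positivity), Real.log_mul (by positivity) (by positivity),
    Real.log_rpow hC, Real.log_rpow hb, Real.log_rpow hg, Real.log_rpow hr]
  have hm : (0:ℝ) ≤ m := m.cast_nonneg
  rw [← mul_le_mul_iff_of_pos_left hd]
  field_simp
  linarith [mul_le_mul_of_nonneg_left hlog_decay (by positivity : (0:ℝ) ≤ d + 1),
    mul_le_mul_of_nonneg_left hlog_q hm]

theorem stmt17_general {V : Type*} (G : SimpleGraph V)
    (d₁ d₂ C g ε b r : ℝ)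
    (hd₁ : 1 < d₁)
    (hC : 0 < C) (hg : 0 < g) (hb : 0 < b) (hr : 1 ≤ r)
    (hε : 0 < ε) (hε2 : (2:ℝ) ^ (1/(d₁+1)) ≤ (2:ℝ) ^ (1/d₁) / (1+ε))
    (k : ℕ) (hk : 1 ≤ k) (F : ℕ → Set V)
    (hfin : (F 1).Finite) (hne : (F 1).Nonempty)
    (hratio1 : ratio G (F 1) ≤ C / r)
    (hsize1 : ((F 1).ncard : ℝ) ≤ b * r ^ d₂)
    (hiso : ∀ A : Set V, A ⊆ F 1 → A.Nonempty →
      g * ((A.ncard : ℝ)) ^ (1 - 1/d₁) ≤ ((ebd G A).ncard : ℝ))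
    (hchain : ∀ i : ℕ, 1 ≤ i → i < k →
      F (i+1) ⊆ F i ∧ (F (i+1)).Nonempty ∧
        2 * (F (i+1)).ncard ≤ (F i).ncard ∧
        ratio G (F (i+1)) ≤ (1+ε) * ratio G (F i)) :
    C ^ (-(d₁+1)) * b ^ (-(1/d₁)) * g ^ (d₁+1) *
        r ^ ((d₁ ^ 2 - (d₂ - d₁)) / d₁)
      ≤ ((F k).ncard : ℝ) := by
  have hd : 0 < d₁ := by linarith
  have hanti : AntitoneOn F (Icc 1 k) := antitoneOn_of_add_one_le ordConnected_Icc
    fun i _ hi hi' => (hchain i hi.1 (Nat.lt_of_succ_le hi'.2)).1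
  have hsub : F k ⊆ F 1 := hanti ⟨le_rfl, hk⟩ ⟨hk, le_rfl⟩ hk
  have hne_k : (F k).Nonempty := by
    obtain rfl | hk1 := hk.eq_or_lt
    · exact hne
    · obtain ⟨j, rfl⟩ := Nat.exists_eq_add_of_lt hk1
      exact (hchain (1 + j) (by omega) (by omega)).2.1
  have hn : (0:ℝ) < (F k).ncard := mod_cast (ncard_pos (hfin.subset hsub)).mpr hne_k
  have hratio_k : ratio G (F k) ≤ (1 + ε) ^ (k - 1) * ratio G (F 1) :=
    le_pow_sub_one_mul_of_le_mul (x := fun i => ratio G (F i)) (by positivity) hk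
      fun i hi hik => (hchain i hi hik).2.2.2
  have hcard_k : ((F k).ncard : ℝ) ≤ 2⁻¹ ^ (k - 1) * (F 1).ncard :=
    le_pow_sub_one_mul_of_le_mul (x := fun i => ((F i).ncard : ℝ)) (by norm_num) hk
      fun i hi hik => by
        rw [inv_mul_eq_div, le_div_iff₀' two_pos]
        exact_mod_cast (hchain i hi hik).2.2.1
  rw [inv_pow, le_inv_mul_iff₀ (by positivity)] at hcard_k
  refine le_of_mul_rpow_neg_le_of_two_pow_mul_le hd hC hg hb (by linarith) (by linarith) hn
    (rpow_mul_add_one_le_two hd (by linarith) hε2) ?_ (hcard_k.trans hsize1)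
  calc g * ((F k).ncard : ℝ) ^ (-(1 / d₁)) ≤ ratio G (F k) :=
        mul_rpow_neg_le_div hn (hiso _ hsub hne_k)
    _ ≤ (1 + ε) ^ (k - 1) * ratio G (F 1) := hratio_k
    _ ≤ (1 + ε) ^ (k - 1) * (C / r) := by gcongr

theorem stmt17 {V : Type*} (G : SimpleGraph V)
    (d₁ d₂ C g ε b r : ℝ)
    (hd₁ : 1 < d₁) (hd₁₂ : d₁ ≤ d₂) (hsq : d₂ - d₁ < d₁ ^ 2)
    (hC : 0 < C) (hg : 0 < g) (hb : 0 < b) (hr : 1 ≤ r)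
    (hε : 0 < ε) (hε2 : (2:ℝ) ^ (1/(d₁+1)) ≤ (2:ℝ) ^ (1/d₁) / (1+ε))
    (k : ℕ) (hk : 1 ≤ k) (F : ℕ → Set V)
    (hfin : (F 1).Finite) (hne : (F 1).Nonempty)
    (hratio1 : ratio G (F 1) ≤ C / r)
    (hsize1 : ((F 1).ncard : ℝ) ≤ b * r ^ d₂)
    (hiso : ∀ A : Set V, A ⊆ F 1 → A.Nonempty →
      g * ((A.ncard : ℝ)) ^ (1 - 1/d₁) ≤ ((ebd G A).ncard : ℝ))
    (hchain : ∀ i : ℕ, 1 ≤ i → i < k →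
      F (i+1) ⊆ F i ∧ (F (i+1)).Nonempty ∧
        2 * (F (i+1)).ncard ≤ (F i).ncard ∧
        ratio G (F (i+1)) ≤ (1+ε) * ratio G (F i))
    (hstop : ¬ ∃ A : Set V, A ⊆ F k ∧ A.Nonempty ∧
      2 * A.ncard ≤ (F k).ncard ∧ ratio G A ≤ (1+ε) * ratio G (F k)) :
    C ^ (-(d₁+1)) * b ^ (-(1/d₁)) * g ^ (d₁+1) *
        r ^ ((d₁ ^ 2 - (d₂ - d₁)) / d₁)
      ≤ ((F k).ncard : ℝ) :=
  stmt17_general G d₁ d₂ C g ε b r hd₁ hC hg hb hr hε hε2 k hk F hfin hne hratio1 hsize1 hiso hchain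
end
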